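/- The subtyping relation on timed local session types is transitive: if T₁ ≤ T₂ and T₂ ≤ T₃ then T₁ ≤ T₃, for closed well-guarded timed local types. -/
import Mathlib


set_option linter.unusedVariables false
set_option autoImplicit false

open Classical

/-! ## Clocks, constraints, valuations, resets -/

/-- Clocks, named by a pair (owner role, identifier). -/
abbrev Clock := ℕ × ℕ

/-- Clock constraints `δ ::= true | C > b | C = b | ¬δ | δ ∧ δ`. -/
inductive CConstr : Type
  | tt : CConstr
  | gt : Clock → ℚ → CConstr
  | eq : Clock → ℚ → CConstr
  | neg : CConstr → CConstr
  | and : CConstr → CConstr → CConstr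

/-- Clock valuations `ν`. -/
abbrev CVal := Clock → ℝ

/-- Satisfaction `ν ⊨ δ`. -/
def CConstr.sat (ν : CVal) : CConstr → Prop
  | .tt => True
  | .gt c b => (b : ℝ) < ν c
  | .eq c b => ν c = (b : ℝ)
  | .neg δ => ¬ CConstr.sat ν δ
  | .and δ₁ δ₂ => CConstr.sat ν δ₁ ∧ CConstr.sat ν δ₂

/-- Reset predicates `λ` (sets of clocks to be reset). -/
abbrev ResetSet := Set Clock

/-- `ν[λ ↦ 0]`. -/
noncomputable def valReset (ν : CVal) (ρ : ResetSet) : CVal :=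
  fun c => if c ∈ ρ then 0 else ν c

/-! ## Timed local types

Branches are indexed by labels (natural numbers); a choice carries its index
set `I`, the payload sorts `(sc i, st i)`, clock constraints `δ i`,
reset predicates `ρ i` and continuations `c i`. -/

inductive LType : Type
  | end_ : LType
  | var : ℕ → LType
  | mu : LType → LType
  | ext : ℕ → Set ℕ → (ℕ → CConstr) → (ℕ → LType) → (ℕ → CConstr) → (ℕ → ResetSet) → (ℕ → LType) → LType
  | int : ℕ → Set ℕ → (ℕ → CConstr) → (ℕ → LType) → (ℕ → CConstr) → (ℕ → ResetSet) → (ℕ → LType) → LType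

/-- Substitution of `U` for the de Bruijn variable `n` (for closed `U`). -/
def LType.subst : LType → ℕ → LType → LType
  | .end_, _, _ => .end_
  | .var m, n, U => if m = n then U else .var m
  | .mu T, n, U => .mu (T.subst (n+1) U)
  | .ext p I sc st δ ρ c, n, U =>
      .ext p I sc (fun i => (st i).subst n U) δ ρ (fun i => (c i).subst n U)
  | .int p I sc st δ ρ c, n, U =>
      .int p I sc (fun i => (st i).subst n U) δ ρ (fun i => (c i).subst n U)

def LType.closedAt : LType → ℕ → Prop
  | .end_, _ => True
  | .var m, k => m < k
  | .mu T, k => T.closedAt (k+1)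
  | .ext _ I _ st _ _ c, k => ∀ i ∈ I, (st i).closedAt k ∧ (c i).closedAt k
  | .int _ I _ st _ _ c, k => ∀ i ∈ I, (st i).closedAt k ∧ (c i).closedAt k

/-- A timed local type is closed if it has no free recursion variables. -/
def LType.Closed (T : LType) : Prop := T.closedAt 0

/-- Variable `n` occurs unguarded (on the `μ`-spine). -/
def LType.unguardedVar : LType → ℕ → Prop
  | .var m, n => m = n
  | .mu T, n => T.unguardedVar (n+1)
  | _, _ => False

/-- Well-guardedness (contractiveness) of recursion. -/
def LType.Guarded : LType → Prop
  | .end_ => True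
  | .var _ => True
  | .mu T => ¬ T.unguardedVar 0 ∧ T.Guarded
  | .ext _ I _ st _ _ c => ∀ i ∈ I, (st i).Guarded ∧ (c i).Guarded
  | .int _ I _ st _ _ c => ∀ i ∈ I, (st i).Guarded ∧ (c i).Guarded

/-- `unfold(T)`: `unfold(μt.T) = unfold(T[μt.T/t])`, identity otherwise. -/
inductive LType.Unfolds : LType → LType → Prop
  | end_ : LType.Unfolds .end_ .end_
  | var (n : ℕ) : LType.Unfolds (.var n) (.var n)
  | ext {p : ℕ} {I : Set ℕ} {sc : ℕ → CConstr} {st : ℕ → LType} {δ : ℕ → CConstr}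
      {ρ : ℕ → ResetSet} {c : ℕ → LType} :
      LType.Unfolds (.ext p I sc st δ ρ c) (.ext p I sc st δ ρ c)
  | int {p : ℕ} {I : Set ℕ} {sc : ℕ → CConstr} {st : ℕ → LType} {δ : ℕ → CConstr}
      {ρ : ℕ → ResetSet} {c : ℕ → LType} :
      LType.Unfolds (.int p I sc st δ ρ c) (.int p I sc st δ ρ c)
  | mu {T U : LType} : LType.Unfolds (T.subst 0 (.mu T)) U → LType.Unfolds (.mu T) U

/-! ## Coinductive subtyping, as the greatest fixed point of `SubStep` -/

inductive SubStep (R : LType → LType → Prop) : LType → LType → Prop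
  | end_ : SubStep R .end_ .end_
  | int {p : ℕ} {I I' : Set ℕ} {sc sc' : ℕ → CConstr} {st st' : ℕ → LType}
      {δ δ' : ℕ → CConstr} {ρ ρ' : ℕ → ResetSet} {c c' : ℕ → LType} :
      I' ⊆ I →
      (∀ i ∈ I', sc' i = sc i ∧ R (st' i) (st i) ∧ δ' i = δ i ∧ ρ' i = ρ i ∧ R (c i) (c' i)) →
      SubStep R (.int p I sc st δ ρ c) (.int p I' sc' st' δ' ρ' c')
  | ext {p : ℕ} {I I' : Set ℕ} {sc sc' : ℕ → CConstr} {st st' : ℕ → LType}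
      {δ δ' : ℕ → CConstr} {ρ ρ' : ℕ → ResetSet} {c c' : ℕ → LType} :
      I ⊆ I' →
      (∀ i ∈ I, sc' i = sc i ∧ R (st i) (st' i) ∧ δ' i = δ i ∧ ρ' i = ρ i ∧ R (c i) (c' i)) →
      SubStep R (.ext p I sc st δ ρ c) (.ext p I' sc' st' δ' ρ' c')
  | muL {T U : LType} : R (T.subst 0 (.mu T)) U → SubStep R (.mu T) U
  | muR {T U : LType} : R T (U.subst 0 (.mu U)) → SubStep R T (.mu U)

/-- Coinductive subtyping `T ⩽ U` on timed local types. -/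
def Subty (T U : LType) : Prop :=
  ∃ R : LType → LType → Prop, (∀ a b, R a b → SubStep R a b) ∧ R T U

/-- Subtyping on sorts `(δ, T) ⩽ (δ, T')`. -/
def SortSub (S S' : CConstr × LType) : Prop := S.1 = S'.1 ∧ Subty S.2 S'.2

/-! ## Merge operator -/

/-- Binary merge `Merge T U V` meaning `T ⊓ U = V`. -/
inductive Merge : LType → LType → LType → Prop
  | end_ : Merge .end_ .end_ .end_
  | var (n : ℕ) : Merge (.var n) (.var n) (.var n)
  | mu {T U V : LType} : Merge T U V → Merge (.mu T) (.mu U) (.mu V)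
  | int {p : ℕ} {I : Set ℕ} {sc : ℕ → CConstr} {st : ℕ → LType} {δ : ℕ → CConstr}
      {ρ : ℕ → ResetSet} {c c' c'' : ℕ → LType} :
      (∀ i ∈ I, Merge (c i) (c' i) (c'' i)) →
      Merge (.int p I sc st δ ρ c) (.int p I sc st δ ρ c') (.int p I sc st δ ρ c'')
  | ext {p : ℕ} {I J : Set ℕ} {sc sc' sc'' : ℕ → CConstr} {st st' st'' : ℕ → LType}
      {δ δ' δ'' : ℕ → CConstr} {ρ ρ' ρ'' : ℕ → ResetSet} {c c' c'' : ℕ → LType} :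
      (∀ i ∈ I ∩ J, Merge (c i) (c' i) (c'' i)) →
      (∀ i ∈ I, sc'' i = sc i ∧ st'' i = st i ∧ δ'' i = δ i ∧ ρ'' i = ρ i ∧ (i ∉ J → c'' i = c i)) →
      (∀ i ∈ J, sc'' i = sc' i ∧ st'' i = st' i ∧ δ'' i = δ' i ∧ ρ'' i = ρ' i ∧ (i ∉ I → c'' i = c' i)) →
      Merge (.ext p I sc st δ ρ c) (.ext p J sc' st' δ' ρ' c') (.ext p (I ∪ J) sc'' st'' δ'' ρ'' c'')

/-- Merge `⊓_{i ∈ I} f i = M` of a (finite, nonempty) mergeable family. -/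
inductive MergeFam {ι : Type} : Set ι → (ι → LType) → LType → Prop
  | single (i : ι) (f : ι → LType) : MergeFam {i} f (f i)
  | insert {I : Set ι} {f : ι → LType} {i : ι} {M M' : LType} :
      i ∉ I → MergeFam I f M → Merge (f i) M M' → MergeFam (insert i I) f M'

/-! ## Timed global types -/

inductive GType : Type
  | end_ : GType
  | var : ℕ → GType
  | mu : GType → GType
  /-- transmission `p → q { ℓᵢ(Sᵢ){δᵒᵢ, λᵒᵢ, δⁱᵢ, λⁱᵢ}. Gᵢ }`. -/
  | comm : ℕ → ℕ → Set ℕ → (ℕ → CConstr) → (ℕ → LType) →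
      (ℕ → CConstr) → (ℕ → ResetSet) → (ℕ → CConstr) → (ℕ → ResetSet) → (ℕ → GType) → GType
  /-- transmission en route `p ↝ q : j { ... }`. -/
  | commT : ℕ → ℕ → Set ℕ → (ℕ → CConstr) → (ℕ → LType) →
      (ℕ → CConstr) → (ℕ → ResetSet) → (ℕ → CConstr) → (ℕ → ResetSet) → (ℕ → GType) → ℕ → GType

def GType.subst : GType → ℕ → GType → GType
  | .end_, _, _ => .end_
  | .var m, n, U => if m = n then U else .var m
  | .mu G, n, U => .mu (G.subst (n+1) U)
  | .comm p q I sc st δo ρo δi ρi G, n, U =>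
      .comm p q I sc st δo ρo δi ρi (fun i => (G i).subst n U)
  | .commT p q I sc st δo ρo δi ρi G j, n, U =>
      .commT p q I sc st δo ρo δi ρi (fun i => (G i).subst n U) j

def GType.closedAt : GType → ℕ → Prop
  | .end_, _ => True
  | .var m, k => m < k
  | .mu G, k => G.closedAt (k+1)
  | .comm _ _ I _ _ _ _ _ _ G, k => ∀ i ∈ I, (G i).closedAt k
  | .commT _ _ I _ _ _ _ _ _ G _, k => ∀ i ∈ I, (G i).closedAt k

def GType.Closed (G : GType) : Prop := G.closedAt 0

def GType.unguardedVar : GType → ℕ → Prop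
  | .var m, n => m = n
  | .mu G, n => G.unguardedVar (n+1)
  | _, _ => False

def GType.Guarded : GType → Prop
  | .end_ => True
  | .var _ => True
  | .mu G => ¬ G.unguardedVar 0 ∧ G.Guarded
  | .comm _ _ I _ st _ _ _ _ G => ∀ i ∈ I, (st i).Guarded ∧ (G i).Guarded
  | .commT _ _ I _ st _ _ _ _ G _ => ∀ i ∈ I, (st i).Guarded ∧ (G i).Guarded

/-- Free occurrence of the de Bruijn recursion variable `n` in a global type. -/
def GType.hasFree : GType → ℕ → Prop
  | .end_, _ => False
  | .var m, n => m = n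
  | .mu G, n => G.hasFree (n+1)
  | .comm _ _ I _ _ _ _ _ _ G, n => ∃ i ∈ I, (G i).hasFree n
  | .commT _ _ I _ _ _ _ _ _ G _, n => ∃ i ∈ I, (G i).hasFree n

/-- The set of roles of a timed global type. -/
def GType.roles : GType → Set ℕ
  | .end_ => ∅
  | .var _ => ∅
  | .mu G => G.roles
  | .comm p q I _ _ _ _ _ _ G => {r | r = p ∨ r = q ∨ ∃ i ∈ I, r ∈ (G i).roles}
  | .commT p q I _ _ _ _ _ _ G _ => {r | r = p ∨ r = q ∨ ∃ i ∈ I, r ∈ (G i).roles}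

/-- `unfold(G)` for global types. -/
inductive GType.Unfolds : GType → GType → Prop
  | end_ : GType.Unfolds .end_ .end_
  | var (n : ℕ) : GType.Unfolds (.var n) (.var n)
  | comm {p q : ℕ} {I : Set ℕ} {sc : ℕ → CConstr} {st : ℕ → LType} {δo δi : ℕ → CConstr}
      {ρo ρi : ℕ → ResetSet} {G : ℕ → GType} :
      GType.Unfolds (.comm p q I sc st δo ρo δi ρi G) (.comm p q I sc st δo ρo δi ρi G)
  | commT {p q : ℕ} {I : Set ℕ} {sc : ℕ → CConstr} {st : ℕ → LType} {δo δi : ℕ → CConstr}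
      {ρo ρi : ℕ → ResetSet} {G : ℕ → GType} {j : ℕ} :
      GType.Unfolds (.commT p q I sc st δo ρo δi ρi G j) (.commT p q I sc st δo ρo δi ρi G j)
  | mu {G G' : GType} : GType.Unfolds (G.subst 0 (.mu G)) G' → GType.Unfolds (.mu G) G'

/-! ## Projection of timed global types onto roles -/

inductive GProj : GType → ℕ → LType → Prop
  | end_ (r : ℕ) : GProj .end_ r .end_
  | var (n r : ℕ) : GProj (.var n) r (.var n)
  | muIn {G : GType} {r : ℕ} {T : LType} :
      (r ∈ G.roles ∨ ∃ n, (GType.mu G).hasFree n) →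
      GProj G r T → GProj (.mu G) r (.mu T)
  | muOut {G : GType} {r : ℕ} :
      ¬ (r ∈ G.roles ∨ ∃ n, (GType.mu G).hasFree n) →
      GProj (.mu G) r .end_
  | commSend {p q : ℕ} {I : Set ℕ} {sc : ℕ → CConstr} {st : ℕ → LType}
      {δo δi : ℕ → CConstr} {ρo ρi : ℕ → ResetSet} {G : ℕ → GType} {T : ℕ → LType} :
      p ≠ q →
      (∀ i ∈ I, GProj (G i) p (T i)) →
      GProj (.comm p q I sc st δo ρo δi ρi G) p (.int q I sc st δo ρo T)
  | commRecv {p q : ℕ} {I : Set ℕ} {sc : ℕ → CConstr} {st : ℕ → LType}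
      {δo δi : ℕ → CConstr} {ρo ρi : ℕ → ResetSet} {G : ℕ → GType} {T : ℕ → LType} :
      p ≠ q →
      (∀ i ∈ I, GProj (G i) q (T i)) →
      GProj (.comm p q I sc st δo ρo δi ρi G) q (.ext p I sc st δi ρi T)
  | commOther {p q r : ℕ} {I : Set ℕ} {sc : ℕ → CConstr} {st : ℕ → LType}
      {δo δi : ℕ → CConstr} {ρo ρi : ℕ → ResetSet} {G : ℕ → GType} {T : ℕ → LType} {M : LType} :
      r ≠ p → r ≠ q →
      (∀ i ∈ I, GProj (G i) r (T i)) →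
      MergeFam I T M →
      GProj (.comm p q I sc st δo ρo δi ρi G) r M
  | commTSend {p q : ℕ} {I : Set ℕ} {sc : ℕ → CConstr} {st : ℕ → LType}
      {δo δi : ℕ → CConstr} {ρo ρi : ℕ → ResetSet} {G : ℕ → GType} {j : ℕ} {T : LType} :
      p ≠ q → j ∈ I →
      GProj (G j) p T →
      GProj (.commT p q I sc st δo ρo δi ρi G j) p T
  | commTRecv {p q : ℕ} {I : Set ℕ} {sc : ℕ → CConstr} {st : ℕ → LType}
      {δo δi : ℕ → CConstr} {ρo ρi : ℕ → ResetSet} {G : ℕ → GType} {j : ℕ} {T : ℕ → LType} :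
      p ≠ q →
      (∀ i ∈ I, GProj (G i) q (T i)) →
      GProj (.commT p q I sc st δo ρo δi ρi G j) q (.ext p I sc st δi ρi T)
  | commTOther {p q r : ℕ} {I : Set ℕ} {sc : ℕ → CConstr} {st : ℕ → LType}
      {δo δi : ℕ → CConstr} {ρo ρi : ℕ → ResetSet} {G : ℕ → GType} {j : ℕ} {T : ℕ → LType} {M : LType} :
      r ≠ p → r ≠ q →
      (∀ i ∈ I, GProj (G i) r (T i)) →
      MergeFam I T M →
      GProj (.commT p q I sc st δo ρo δi ρi G j) r M

/-! ## Typing environments -/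

/-- Payload sorts `(δ, T)`. -/
abbrev PSortT := CConstr × LType

/-- Message types `⟨q, ℓ, S⟩`: receiver, label, payload sort. -/
abbrev MsgT := ℕ × ℕ × PSortT

/-- Queue types: sequences of message types (`[]` is the empty queue `∅`). -/
abbrev MQueue := List MsgT

/-- Timed-session/queue types: a timed session type with clock valuation,
a queue type, or a combination. -/
inductive TEntry : Type
  | sess : CVal → LType → TEntry
  | qu : MQueue → TEntry
  | both : CVal → LType → MQueue → TEntry

/-- Channels with roles `s[p]`. -/
abbrev TChan := ℕ × ℕ

/-- Typing environments: partial maps from channels to timed-session/queue types. -/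
abbrev TEnv := TChan → Option TEntry

def entryAddTime (t : ℝ) : TEntry → TEntry
  | .sess ν T => .sess (fun c => ν c + t) T
  | .qu σ => .qu σ
  | .both ν T σ => .both (fun c => ν c + t) T σ

/-- `Γ + t`. -/
def envAddTime (Γ : TEnv) (t : ℝ) : TEnv := fun c => (Γ c).map (entryAddTime t)

def envDom (Γ : TEnv) : Set TChan := {c | Γ c ≠ none}

def envUpdate (Γ : TEnv) (c : TChan) (e : TEntry) : TEnv :=
  fun d => if d = c then some e else Γ d

def entrySess : TEntry → Option (CVal × LType)
  | .sess ν T => some (ν, T)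
  | .qu _ => none
  | .both ν T _ => some (ν, T)

def entryQueue : TEntry → Option MQueue
  | .sess _ _ => none
  | .qu σ => some σ
  | .both _ _ σ => some σ

def entrySetSess : TEntry → CVal → LType → TEntry
  | .sess _ _, ν, T => .sess ν T
  | .qu σ, ν, T => .both ν T σ
  | .both _ _ σ, ν, T => .both ν T σ

def entrySetQueue : TEntry → MQueue → TEntry
  | .sess ν T, σ => .both ν T σ
  | .qu _, σ => .qu σ
  | .both ν T _, σ => .both ν T σ

/-- Transition labels: `s:p!q:ℓ`, `s:p?q:ℓ` and time `t`. -/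
inductive ELabel : Type
  | send (s p q ℓ : ℕ)
  | recv (s p q ℓ : ℕ)
  | time (t : ℝ)

/-- Labelled transitions of typing environments. -/
inductive EStep : TEnv → ELabel → TEnv → Prop
  /-- `Γ-⊕`: output appends a message to the sender's queue. -/
  | send {Γ : TEnv} {s p q k : ℕ} {ν : CVal} {σ : MQueue} {I : Set ℕ}
      {sc : ℕ → CConstr} {st : ℕ → LType} {δ : ℕ → CConstr} {ρ : ℕ → ResetSet}
      {c : ℕ → LType} {e : TEntry} :
      Γ (s, p) = some e →
      entrySess e = some (ν, .int q I sc st δ ρ c) →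
      entryQueue e = some σ →
      k ∈ I → CConstr.sat ν (δ k) →
      EStep Γ (.send s p q k)
        (envUpdate Γ (s, p)
          (entrySetQueue (entrySetSess e (valReset ν (ρ k)) (c k)) (σ ++ [(q, k, (sc k, st k))])))
  /-- `Γ-&`: input consumes the head of the sender's queue (with `p` the sender
  and `q` the receiver; the label is `s:q?p:k`). -/
  | recv {Γ : TEnv} {s p q k : ℕ} {ν : CVal} {S₀ : PSortT} {σ : MQueue} {I : Set ℕ}
      {sc : ℕ → CConstr} {st : ℕ → LType} {δ : ℕ → CConstr} {ρ : ℕ → ResetSet}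
      {c : ℕ → LType} {ep eq : TEntry} :
      p ≠ q →
      Γ (s, p) = some ep →
      entryQueue ep = some ((q, k, S₀) :: σ) →
      Γ (s, q) = some eq →
      entrySess eq = some (ν, .ext p I sc st δ ρ c) →
      k ∈ I → CConstr.sat ν (δ k) →
      SortSub S₀ (sc k, st k) →
      EStep Γ (.recv s q p k)
        (envUpdate (envUpdate Γ (s, p) (entrySetQueue ep σ)) (s, q)
          (entrySetSess eq (valReset ν (ρ k)) (c k)))
  /-- `Γ-μ`: recursion unfolding. -/
  | unfoldRec {Γ Γ' : TEnv} {s p : ℕ} {ν : CVal} {T : LType} {α : ELabel} {e : TEntry} :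
      Γ (s, p) = some e →
      entrySess e = some (ν, .mu T) →
      EStep (envUpdate Γ (s, p) (entrySetSess e ν (T.subst 0 (.mu T)))) α Γ' →
      EStep Γ α Γ'
  /-- time passes uniformly over the whole environment. -/
  | time {Γ : TEnv} {t : ℝ} : 0 ≤ t → EStep Γ (.time t) (envAddTime Γ t)

/-! ## Environment congruence-free subtyping -/

/-- Subtyping on queue types. -/
inductive QSub : MQueue → MQueue → Prop
  | nil : QSub [] []
  | cons {q ℓ : ℕ} {S S' : PSortT} {σ σ' : MQueue} :
      S.1 = S'.1 → Subty S'.2 S.2 → QSub σ σ' →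
      QSub ((q, ℓ, S) :: σ) ((q, ℓ, S') :: σ')

/-- Subtyping on timed-session/queue types. -/
inductive EntrySub : TEntry → TEntry → Prop
  | sess {ν : CVal} {T T' : LType} : Subty T T' → EntrySub (.sess ν T) (.sess ν T')
  | qu {σ σ' : MQueue} : QSub σ σ' → EntrySub (.qu σ) (.qu σ')
  | both {ν : CVal} {T T' : LType} {σ σ' : MQueue} :
      Subty T T' → QSub σ σ' → EntrySub (.both ν T σ) (.both ν T' σ')

/-- Environment subtyping: equal domains and pointwise entry subtyping. -/
def SubEnv (Γ Γ' : TEnv) : Prop :=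
  ∀ c, (Γ c = none ∧ Γ' c = none) ∨
    ∃ e e', Γ c = some e ∧ Γ' c = some e' ∧ EntrySub e e'

/-! ## Association between timed global types and typing environments -/

/-- Receivers of a queue type. -/
def queueReceivers (σ : MQueue) : Set ℕ := {q | ∃ m ∈ σ, m.1 = q}

/-- Association of the queue part `Γ_Δ` (given as a map from roles to queues)
with a timed global type. -/
inductive QAssoc : (ℕ → MQueue) → GType → Prop
  | end_ {f : ℕ → MQueue} : (∀ p, f p = []) → QAssoc f .end_
  | var {f : ℕ → MQueue} {n : ℕ} : (∀ p, f p = []) → QAssoc f (.var n)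
  | mu {f : ℕ → MQueue} {G : GType} : (∀ p, f p = []) → QAssoc f (.mu G)
  | comm {f : ℕ → MQueue} {p q : ℕ} {I : Set ℕ} {sc : ℕ → CConstr} {st : ℕ → LType}
      {δo δi : ℕ → CConstr} {ρo ρi : ℕ → ResetSet} {G : ℕ → GType} :
      q ∉ queueReceivers (f p) →
      (∀ i ∈ I, QAssoc f (G i)) →
      QAssoc f (.comm p q I sc st δo ρo δi ρi G)
  | commT {f : ℕ → MQueue} {p q : ℕ} {I : Set ℕ} {sc : ℕ → CConstr} {st : ℕ → LType}
      {δo δi : ℕ → CConstr} {ρo ρi : ℕ → ResetSet} {G : ℕ → GType} {j : ℕ}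
      {S₀ : PSortT} {σ' : MQueue} :
      j ∈ I →
      f p = (q, j, S₀) :: σ' →
      S₀.1 = sc j → Subty S₀.2 (st j) →
      QAssoc (Function.update f p σ') (G j) →
      QAssoc f (.commT p q I sc st δo ρo δi ρi G j)

/-- Association `(ν, G) ⊑ₛ Γ` of a typing environment with a timed global type
for session `s` (Γ splits into a part reflecting `G`, a queue part matching the
in-transit messages of `G`, and an ended part). -/
noncomputable def Assoc (ν : CVal) (G : GType) (Γ : TEnv) (s : ℕ) : Prop :=
  (∀ c : TChan, Γ c ≠ none → c.1 = s) ∧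
  (∃ (νp : ℕ → CVal) (Tp : ℕ → LType) (f : ℕ → MQueue),
    (∀ p ∈ G.roles, Γ (s, p) = some (.both (νp p) (Tp p) (f p))) ∧
    (∀ p ∈ G.roles, ∃ T₀ : LType, GProj G p T₀ ∧ Subty T₀ (Tp p)) ∧
    (∀ p ∈ G.roles, ∀ k : ℕ, ν (p, k) = νp p (p, k)) ∧
    QAssoc (fun p => if p ∈ G.roles then f p else []) G) ∧
  (∀ p : ℕ, p ∉ G.roles → ∀ e, Γ (s, p) = some e → ∃ ν' : CVal, e = .both ν' .end_ [])

/-! ### Auxiliary lemmas for transitivity -/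

/-- Number of leading `μ`s. -/
def muHeight : LType → ℕ
  | .mu T => muHeight T + 1
  | _ => 0

lemma not_unguarded : ∀ (T : LType) (k n : ℕ),
    T.closedAt k → T.Guarded → k ≤ n → ¬ T.unguardedVar n := by
  intro T
  induction T with
  | end_ => intro k n _ _ _ h; exact h
  | var m =>
    intro k n hc _ hkn h
    have hm : m = n := h
    have hk : m < k := hc
    omega
  | mu T ih =>
    intro k n hc hg hkn h
    exact ih (k+1) (n+1) hc hg.2 (by omega) h
  | ext p I sc st δ ρ c ihst ihc => intro k n _ _ _ h; exact h
  | int p I sc st δ ρ c ihst ihc => intro k n _ _ _ h; exact h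

lemma unguarded_subst {V : LType} (hV : ∀ j, ¬ V.unguardedVar j) :
    ∀ (T : LType) (n m : ℕ), ¬ T.unguardedVar m → ¬ (T.subst n V).unguardedVar m := by
  intro T
  induction T with
  | end_ => intro n m _ h; exact h
  | var p =>
    intro n m hT h
    by_cases hp : p = n
    · simp only [LType.subst, hp, if_pos rfl] at h
      exact hV m h
    · simp only [LType.subst, if_neg hp] at h
      exact hT h
  | mu T ih =>
    intro n m hT h
    exact ih (n+1) (m+1) hT h
  | ext p I sc st δ ρ c ihst ihc => intro n m _ h; exact h
  | int p I sc st δ ρ c ihst ihc => intro n m _ h; exact h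

lemma muHeight_subst : ∀ (T : LType) (n : ℕ) (V : LType),
    ¬ T.unguardedVar n → muHeight (T.subst n V) = muHeight T := by
  intro T
  induction T with
  | end_ => intro n V _; rfl
  | var p =>
    intro n V hT
    have hp : p ≠ n := fun h => hT h
    simp only [LType.subst, if_neg hp]
  | mu T ih =>
    intro n V hT
    show muHeight (T.subst (n+1) V) + 1 = muHeight T + 1
    rw [ih (n+1) V hT]
  | ext p I sc st δ ρ c ihst ihc => intro n V _; rfl
  | int p I sc st δ ρ c ihst ihc => intro n V _; rfl

lemma closedAt_mono : ∀ (T : LType) (k m : ℕ), T.closedAt k → k ≤ m → T.closedAt m := by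
  intro T
  induction T with
  | end_ => intro k m _ _; trivial
  | var p => intro k m hc hkm; exact lt_of_lt_of_le hc hkm
  | mu T ih => intro k m hc hkm; exact ih (k+1) (m+1) hc (by omega)
  | ext p I sc st δ ρ c ihst ihc =>
    intro k m hc hkm i hi
    exact ⟨ihst i k m (hc i hi).1 hkm, ihc i k m (hc i hi).2 hkm⟩
  | int p I sc st δ ρ c ihst ihc =>
    intro k m hc hkm i hi
    exact ⟨ihst i k m (hc i hi).1 hkm, ihc i k m (hc i hi).2 hkm⟩

lemma closedAt_subst {V : LType} (hV : V.closedAt 0) :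
    ∀ (T : LType) (n : ℕ), T.closedAt (n+1) → (T.subst n V).closedAt n := by
  intro T
  induction T with
  | end_ => intro n _; trivial
  | var p =>
    intro n hc
    have hp : p < n + 1 := hc
    by_cases h : p = n
    · simp only [LType.subst, if_pos h]
      exact closedAt_mono V 0 n hV (by omega)
    · simp only [LType.subst, if_neg h]
      show p < n
      omega
  | mu T ih => intro n hc; exact ih (n+1) hc
  | ext p I sc st δ ρ c ihst ihc =>
    intro n hc i hi
    exact ⟨ihst i n (hc i hi).1, ihc i n (hc i hi).2⟩
  | int p I sc st δ ρ c ihst ihc =>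
    intro n hc i hi
    exact ⟨ihst i n (hc i hi).1, ihc i n (hc i hi).2⟩

lemma guarded_subst {V : LType} (hVg : V.Guarded) (hVu : ∀ j, ¬ V.unguardedVar j) :
    ∀ (T : LType) (n : ℕ), T.Guarded → (T.subst n V).Guarded := by
  intro T
  induction T with
  | end_ => intro n _; trivial
  | var p =>
    intro n _
    by_cases h : p = n
    · simp only [LType.subst, if_pos h]; exact hVg
    · simp only [LType.subst, if_neg h]; trivial
  | mu T ih =>
    intro n hg
    exact ⟨unguarded_subst hVu T (n+1) 0 hg.1, ih (n+1) hg.2⟩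
  | ext p I sc st δ ρ c ihst ihc =>
    intro n hg i hi
    exact ⟨ihst i n (hg i hi).1, ihc i n (hg i hi).2⟩
  | int p I sc st δ ρ c ihst ihc =>
    intro n hg i hi
    exact ⟨ihst i n (hg i hi).1, ihc i n (hg i hi).2⟩

lemma unfold_closed {U : LType} (hc : (LType.mu U).Closed) :
    (U.subst 0 (.mu U)).Closed :=
  closedAt_subst hc U 0 hc

lemma unfold_guarded {U : LType} (hc : (LType.mu U).Closed) (hg : (LType.mu U).Guarded) :
    (U.subst 0 (.mu U)).Guarded :=
  guarded_subst hg (fun j => not_unguarded (.mu U) 0 j hc hg (Nat.zero_le j)) U 0 hg.2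

lemma unfold_height {U : LType} (hg : (LType.mu U).Guarded) :
    muHeight (U.subst 0 (.mu U)) = muHeight U :=
  muHeight_subst U 0 (.mu U) hg.1

/-- The composition relation used for transitivity. -/
def Rtrans (a c : LType) : Prop :=
  ∃ b : LType, b.Closed ∧ b.Guarded ∧ Subty a b ∧ Subty b c

lemma Rtrans_post : ∀ (n : ℕ) (b : LType), muHeight b ≤ n → ∀ a c : LType,
    b.Closed → b.Guarded → Subty a b → Subty b c → SubStep Rtrans a c := by
  intro n
  induction n using Nat.strong_induction_on with
  | _ n ih =>
    intro b hn a c hcb hgb hab hbc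
    obtain ⟨S₁, p₁, h₁⟩ := hab
    obtain ⟨S₂, p₂, h₂⟩ := hbc
    have step₁ := p₁ _ _ h₁
    have step₂ := p₂ _ _ h₂
    cases step₁ with
    | end_ =>
      cases step₂ with
      | end_ => exact .end_
      | muR hx =>
        exact .muR ⟨.end_, trivial, trivial, ⟨S₁, p₁, h₁⟩, ⟨S₂, p₂, hx⟩⟩
    | int hsub₁ hbr₁ =>
      cases step₂ with
      | int hsub₂ hbr₂ =>
        refine .int (fun i hi => hsub₁ (hsub₂ hi)) ?_
        intro i hi
        have hi' := hsub₂ hi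
        obtain ⟨e1, r1, e2, e3, r2⟩ := hbr₁ i hi'
        obtain ⟨f1, s1, f2, f3, s2⟩ := hbr₂ i hi
        have hcbi := hcb i hi'
        have hgbi := hgb i hi'
        refine ⟨f1.trans e1, ⟨_, hcbi.1, hgbi.1, ⟨S₂, p₂, s1⟩, ⟨S₁, p₁, r1⟩⟩,
          f2.trans e2, f3.trans e3, ⟨_, hcbi.2, hgbi.2, ⟨S₁, p₁, r2⟩, ⟨S₂, p₂, s2⟩⟩⟩
      | muR hx =>
        exact .muR ⟨_, hcb, hgb, ⟨S₁, p₁, h₁⟩, ⟨S₂, p₂, hx⟩⟩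
    | ext hsub₁ hbr₁ =>
      cases step₂ with
      | ext hsub₂ hbr₂ =>
        refine .ext (fun i hi => hsub₂ (hsub₁ hi)) ?_
        intro i hi
        have hi' := hsub₁ hi
        obtain ⟨e1, r1, e2, e3, r2⟩ := hbr₁ i hi
        obtain ⟨f1, s1, f2, f3, s2⟩ := hbr₂ i hi'
        have hcbi := hcb i hi'
        have hgbi := hgb i hi'
        refine ⟨f1.trans e1, ⟨_, hcbi.1, hgbi.1, ⟨S₁, p₁, r1⟩, ⟨S₂, p₂, s1⟩⟩,
          f2.trans e2, f3.trans e3, ⟨_, hcbi.2, hgbi.2, ⟨S₁, p₁, r2⟩, ⟨S₂, p₂, s2⟩⟩⟩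
      | muR hx =>
        exact .muR ⟨_, hcb, hgb, ⟨S₁, p₁, h₁⟩, ⟨S₂, p₂, hx⟩⟩
    | muL hx =>
      exact .muL ⟨_, hcb, hgb, ⟨S₁, p₁, hx⟩, ⟨S₂, p₂, h₂⟩⟩
    | @muR a U hx =>
      cases step₂ with
      | muL hy =>
        have hlt : muHeight U < n := by
          have : muHeight (LType.mu U) = muHeight U + 1 := rfl
          omega
        exact ih (muHeight U) hlt (U.subst 0 (.mu U)) (le_of_eq (unfold_height hgb))
          a c (unfold_closed hcb) (unfold_guarded hcb hgb) ⟨S₁, p₁, hx⟩ ⟨S₂, p₂, hy⟩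
      | muR hy =>
        exact .muR ⟨_, hcb, hgb, ⟨S₁, p₁, h₁⟩, ⟨S₂, p₂, hy⟩⟩

/-- The subtyping relation on timed local session types is
transitive: if `T₁ ⩽ T₂` and `T₂ ⩽ T₃` then `T₁ ⩽ T₃`, for closed well-guarded
timed local types. -/
theorem Subty.trans_of_closed_guarded (T₁ T₂ T₃ : LType)
    (hc₁ : T₁.Closed) (hg₁ : T₁.Guarded)
    (hc₂ : T₂.Closed) (hg₂ : T₂.Guarded)
    (hc₃ : T₃.Closed) (hg₃ : T₃.Guarded)
    (h₁₂ : Subty T₁ T₂) (h₂₃ : Subty T₂ T₃) : Subty T₁ T₃ := by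
  refine ⟨Rtrans, ?_, ⟨T₂, hc₂, hg₂, h₁₂, h₂₃⟩⟩
  rintro a c ⟨b, hcb, hgb, hab, hbc⟩
  exact Rtrans_post (muHeight b) b le_rfl a c hcb hgb hab hbc
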